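/- arXiv:0911.0735 — 6 statements merged into one kernel-verified Lean document; each statement's English description precedes it below -/
import Mathlib

section
/- For every index 1 ≤ ℓ ≤ m, the following identity holds in the group algebra ℚ[L]: σ(∏_{β∈Δ1+∖{δ−ε_ℓ}}(1 + e^{−β})) = e^{2ρ_1 − δ − ε_ℓ} · ∏_{β∈Δ1+∖{δ+ε_ℓ}}(1 + e^{−β}), where σ acts on ℚ[L] as the algebra automorphism e^μ ↦ e^{σ(μ)}. -/
/-!
Write `τ = -σ`. Each factor transforms as `σ(1 + e^{-β}) = 1 + e^{τβ} = e^{τβ}(1 + e^{-τβ})`, so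
`σ` of a product over `S` is `e^{∑ τ(S)}` times the same product over `τ(S)`. The involution `τ`
fixes `δ` and swaps `δ + ε_i ↔ δ - ε_i`, hence maps `Δ₁⁺∖{δ-ε_ℓ}` onto `Δ₁⁺∖{δ+ε_ℓ}`, whose sum is
`2ρ₁ - δ - ε_ℓ`.

Here `k = 2m` when `par = false` and `k = 2m+1` when `par = true`.
-/

open Finset

noncomputable section

abbrev Wt (m : ℕ) := ℚ × (Fin m → ℚ)

abbrev GA (m : ℕ) := AddMonoidAlgebra ℚ (Wt m)

/-- The formal exponential `e^v`. -/
def e {m : ℕ} (v : Wt m) : GA m := AddMonoidAlgebra.single v 1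

def deltaW (m : ℕ) : Wt m := (1, 0)

def epsW {m : ℕ} (i : Fin m) : Wt m := (0, Pi.single i 1)

/-- The set of positive odd roots `Δ₁⁺`; `par = true` for `k = 2m+1`. -/
def Delta1 (m : ℕ) (par : Bool) : Finset (Wt m) :=
  (Finset.univ.image fun i : Fin m => deltaW m + epsW i) ∪
    (Finset.univ.image fun i : Fin m => deltaW m - epsW i) ∪
    (if par then {deltaW m} else ∅)

/-- Half sum of the positive odd roots, `ρ₁ = (m+1-s)δ`. -/
def rho1 (m : ℕ) (par : Bool) : Wt m := (2⁻¹ : ℚ) • (Delta1 m par).sum id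

/-- The automorphism `σ` of the weight lattice: `σ(δ) = -δ`, `σ(ε_i) = ε_i`. -/
def sigmaMap (m : ℕ) (v : Wt m) : Wt m := (-v.1, v.2)

/-- The algebra map of the group algebra induced by `f`: `e^μ ↦ e^{f μ}`. -/
def gmap {m : ℕ} (f : Wt m → Wt m) (x : GA m) : GA m := AddMonoidAlgebra.mapDomain f x

namespace AddMonoidAlgebra

variable {k G : Type*} [CommSemiring k] [AddCommGroup G]

theorem one_add_single_eq_single_mul (v : G) :
    1 + single v (1 : k) = single v 1 * (1 + single (-v) 1) := by
  rw [mul_add, mul_one, single_mul_single, add_neg_cancel, mul_one, add_comm, one_def]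

theorem mapDomain_prod_one_add_single_neg [DecidableEq G] (σ : G →+ G) (hσ : Function.Injective σ)
    (S : Finset G) :
    mapDomain σ (∏ β ∈ S, (1 + single (-β) (1 : k))) =
      single (∑ γ ∈ S.image (-σ), γ) 1 * ∏ γ ∈ S.image (-σ), (1 + single (-γ) 1) := by
  have hτ : Set.InjOn (-σ) S := (neg_injective.comp hσ).injOn
  rw [Finset.sum_image hτ, Finset.prod_image hτ, ← mapDomainRingHom_apply, map_prod]
  simp only [map_add, map_one, mapDomainRingHom_apply, mapDomain_single, map_neg]
  rw [Finset.prod_congr rfl fun β _ => one_add_single_eq_single_mul (-σ β),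
    Finset.prod_mul_distrib, prod_single, Finset.prod_const_one]
  rfl

end AddMonoidAlgebra

def sigmaHom (m : ℕ) : Wt m →+ Wt m :=
  AddMonoidHom.mk' (sigmaMap m) fun a b => by simp only [sigmaMap, Prod.fst_add, Prod.snd_add,
    neg_add, Prod.mk_add_mk]

theorem coe_sigmaHom (m : ℕ) : ⇑(sigmaHom m) = sigmaMap m := rfl

theorem sigmaHom_injective (m : ℕ) : Function.Injective (sigmaHom m) := by
  intro a b h
  simpa [coe_sigmaHom, sigmaMap, Prod.ext_iff] using h

section Delta1

variable {m : ℕ}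

theorem neg_sigmaHom_injective : Function.Injective (-sigmaHom m) :=
  fun _ _ h => sigmaHom_injective m (neg_injective h)

theorem neg_sigmaHom_delta_add_eps (i : Fin m) :
    (-sigmaHom m) (deltaW m + epsW i) = deltaW m - epsW i := by
  simp [coe_sigmaHom, sigmaMap, deltaW, epsW, sub_eq_add_neg]

theorem neg_sigmaHom_delta_sub_eps (i : Fin m) :
    (-sigmaHom m) (deltaW m - epsW i) = deltaW m + epsW i := by
  simp [coe_sigmaHom, sigmaMap, deltaW, epsW, sub_eq_add_neg]

theorem neg_sigmaHom_delta : (-sigmaHom m) (deltaW m) = deltaW m := by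
  simp [coe_sigmaHom, sigmaMap, deltaW]

theorem image_neg_sigmaHom_Delta1 (par : Bool) :
    (Delta1 m par).image (-sigmaHom m) = Delta1 m par := by
  cases par <;> simp only [Delta1, Finset.image_union, Finset.image_image, Function.comp_def,
    neg_sigmaHom_delta_add_eps, neg_sigmaHom_delta_sub_eps, Bool.false_eq_true, ↓reduceIte,
    Finset.image_empty, Finset.image_singleton, neg_sigmaHom_delta] <;>
    rw [Finset.union_comm (Finset.univ.image _)]

theorem delta_add_eps_mem_Delta1 (par : Bool) (i : Fin m) : deltaW m + epsW i ∈ Delta1 m par :=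
  Finset.mem_union_left _ (Finset.mem_union_left _ (Finset.mem_image_of_mem _ (Finset.mem_univ i)))

theorem sum_Delta1 (par : Bool) : ∑ γ ∈ Delta1 m par, γ = (2 : ℚ) • rho1 m par := by
  rw [rho1, smul_smul]
  norm_num

end Delta1

theorem sigma_odd_product_identity_general (m : ℕ) (par : Bool) (l : Fin m) :
    gmap (sigmaMap m)
        (∏ β ∈ (Delta1 m par).erase (deltaW m - epsW l), (1 + e (-β))) =
      e ((2 : ℚ) • rho1 m par - deltaW m - epsW l) *
        ∏ β ∈ (Delta1 m par).erase (deltaW m + epsW l), (1 + e (-β)) := by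
  have h := AddMonoidAlgebra.mapDomain_prod_one_add_single_neg (k := ℚ) (sigmaHom m)
    (sigmaHom_injective m) ((Delta1 m par).erase (deltaW m - epsW l))
  rw [Finset.image_erase neg_sigmaHom_injective, image_neg_sigmaHom_Delta1,
    neg_sigmaHom_delta_sub_eps, Finset.sum_erase_eq_sub (delta_add_eps_mem_Delta1 par l),
    sum_Delta1, ← sub_sub] at h
  exact h

/-- `σ(∏_{β∈Δ₁⁺∖{δ−ε_ℓ}}(1 + e^{−β}))
  = e^{2ρ₁ − δ − ε_ℓ} ⬝ ∏_{β∈Δ₁⁺∖{δ+ε_ℓ}}(1 + e^{−β})`. -/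
theorem sigma_odd_product_identity (m : ℕ) (hm : 2 ≤ m) (par : Bool) (l : Fin m) :
    gmap (sigmaMap m)
        (∏ β ∈ (Delta1 m par).erase (deltaW m - epsW l), (1 + e (-β))) =
      e ((2 : ℚ) • rho1 m par - deltaW m - epsW l) *
        ∏ β ∈ (Delta1 m par).erase (deltaW m + epsW l), (1 + e (-β)) :=
  sigma_odd_product_identity_general m par l
end
end

section
/- Let S be a set of m−1 distinct positive half-integers (elements of 1/2 + ℤ≥0). Then the map λ ↦ λ̃_0 is a bijection from the set of integral g_0-dominant atypical weights with atypicality type S onto the set {t ∈ 1/2 + ℤ : |t| ∉ S}. (This is the classification P^{0+}_{λ̄} = {λ^{(i)} : i ∈ ℤ} of Lemma 3.7(1) in the case k = 2m+1.) -/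
/-!
Combinatorics of weights for the orthosymplectic Lie superalgebra
`osp_{2m+1|2} = B(m,1)` (so `k = 2m+1`, `s = 1/2`), with its distinguished
Borel subalgebra.  A weight is a tuple `λ = (λ₀ | λ₁, …, λ_m) ∈ ℚ^{m+1}`,
encoded as `ℚ × (Fin m → ℚ)` (the index `i : Fin m` stands for the coordinate
`λ_{i+1}`).
-/

open Finset

noncomputable section

/-- The ρ-translated weight `λ̃ = λ + ρ`, with
`ρ = (s−m | m−s, m−1−s, …, 1−s)` and `s = 1/2`. -/
def tilde (m : ℕ) (lam : Wt m) : Wt m :=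
  (lam.1 + 1 / 2 - m, fun i => lam.2 i + (m : ℚ) - 1 / 2 - ((i : ℕ) : ℚ))

/-- `λ` is integral: `λ₀ ∈ ℤ` and `λ₁, …, λ_m` all in `ℤ` or all in `1/2 + ℤ`. -/
def Integral (m : ℕ) (lam : Wt m) : Prop :=
  (∃ n : ℤ, lam.1 = (n : ℚ)) ∧
    ((∀ i, ∃ n : ℤ, lam.2 i = (n : ℚ)) ∨ ∀ i, ∃ n : ℤ, lam.2 i = (n : ℚ) + 1 / 2)

/-- `λ` is `g₀`-dominant: `λ₁ ≥ λ₂ ≥ … ≥ λ_m ≥ 0`. -/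
def G0Dom (m : ℕ) (lam : Wt m) : Prop :=
  (∀ i j : Fin m, i ≤ j → lam.2 j ≤ lam.2 i) ∧ ∀ i, 0 ≤ lam.2 i

/-- `λ` is atypical: `|λ̃₀| = λ̃_ℓ` for some `ℓ`. -/
def Atypical (m : ℕ) (lam : Wt m) : Prop :=
  ∃ l : Fin m, |(tilde m lam).1| = (tilde m lam).2 l

/-- The atypicality type `S(λ̄) = {λ̃_i : i ≠ ℓ}` of an atypical `g₀`-dominant
weight `λ` (where `λ̃_ℓ = |λ̃₀|`). -/
def atypType (m : ℕ) (lam : Wt m) : Finset ℚ :=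
  (Finset.univ.image fun i => (tilde m lam).2 i).erase |(tilde m lam).1|

/-- `λ` is `g`-dominant: it is integral, `g₀`-dominant, `λ₀ ∈ ℤ≥0`, and
`λ_j = 0` whenever `j > λ₀`. -/
def GDom (m : ℕ) (lam : Wt m) : Prop :=
  Integral m lam ∧ G0Dom m lam ∧ 0 ≤ lam.1 ∧
    ∀ i : Fin m, lam.1 < ((i : ℕ) : ℚ) + 1 → lam.2 i = 0

/-- `λ^σ = (−λ₀ + 2(m−s) | λ₁, …, λ_m)` with `s = 1/2`. -/
def sigmaW (m : ℕ) (lam : Wt m) : Wt m := (-lam.1 + 2 * (m : ℚ) - 1, lam.2)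

/-- `γ` is the atypical root of `λ`: `γ = δ + ε_ℓ` if `λ̃₀ = λ̃_ℓ`, and
`γ = δ − ε_ℓ` if `λ̃₀ = −λ̃_ℓ`. -/
def AtypRoot (m : ℕ) (lam γ : Wt m) : Prop :=
  ∃ l : Fin m,
    (γ = deltaW m + epsW l ∧ (tilde m lam).1 = (tilde m lam).2 l) ∨
      (γ = deltaW m - epsW l ∧ (tilde m lam).1 = -(tilde m lam).2 l)

/-- `λ` is regular: `|λ̃₁|, …, |λ̃_m|` are pairwise distinct. -/
def Regular (m : ℕ) (lam : Wt m) : Prop :=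
  ∀ i j : Fin m, |(tilde m lam).2 i| = |(tilde m lam).2 j| → i = j

/-- Elements of the Weyl group `W₀` of type `B_m`: signed permutations
(`true` = change sign). -/
abbrev W0T (m : ℕ) := Equiv.Perm (Fin m) × (Fin m → Bool)

/-- The action of `w ∈ W₀` on ρ-translated weights: it fixes the coordinate
`λ̃₀` and signed-permutes `λ̃₁, …, λ̃_m`. -/
def tact (m : ℕ) (w : W0T m) (v : Wt m) : Wt m :=
  (v.1, fun i => (if w.2 i then (-1 : ℚ) else 1) * v.2 (w.1⁻¹ i))

/-- The signature of `w ∈ W₀`. -/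
def sgn (m : ℕ) (w : W0T m) : ℤ :=
  (Equiv.Perm.sign w.1 : ℤ) * ∏ i, (if w.2 i then (-1 : ℤ) else 1)

/-- `ν` is `W₀`-dot-conjugate to `λ`, i.e. `ν = w·λ = w(λ+ρ) − ρ` for some
`w ∈ W₀`. -/
def DotConj (m : ℕ) (lam nu : Wt m) : Prop :=
  ∃ w : W0T m, tilde m nu = tact m w (tilde m lam)

/-- `ν = λ⁺`: `ν` is the (unique) `g₀`-dominant `W₀`-dot-conjugate of `λ`. -/
def IsPlus (m : ℕ) (lam nu : Wt m) : Prop :=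
  G0Dom m nu ∧ DotConj m lam nu

/-- `ν = λˇ = (λ − a₋γ)⁺`, where `γ` is the atypical root of `λ` and `a₋` is
the smallest positive integer with `λ − a₋γ` regular. -/
def IsCheck (m : ℕ) (lam nu : Wt m) : Prop :=
  ∃ γ : Wt m, AtypRoot m lam γ ∧
    ∃ a : ℕ, 0 < a ∧ Regular m (lam - (a : ℚ) • γ) ∧
      (∀ b : ℕ, 0 < b → b < a → ¬Regular m (lam - (b : ℚ) • γ)) ∧
      IsPlus m (lam - (a : ℚ) • γ) nu

/-- `ν = λ^ = (λ + a₊γ)⁺`, where `γ` is the atypical root of `λ` and `a₊` is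
the smallest positive integer with `λ + a₊γ` regular. -/
def IsHat (m : ℕ) (lam nu : Wt m) : Prop :=
  ∃ γ : Wt m, AtypRoot m lam γ ∧
    ∃ a : ℕ, 0 < a ∧ Regular m (lam + (a : ℚ) • γ) ∧
      (∀ b : ℕ, 0 < b → b < a → ¬Regular m (lam + (b : ℚ) • γ)) ∧
      IsPlus m (lam + (a : ℚ) • γ) nu


/-! Passing to `λ̃ = λ + ρ` is an affine bijection of weights. For an integral, `g₀`-dominant,
atypical `λ` the coordinates `λ̃₁ > ⋯ > λ̃_m` form precisely the set `S ∪ {|λ̃₀|}`, and a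
finite set has only one strictly decreasing enumeration, so `λ̃₀` determines `λ`. Conversely,
for a half-integer `t` with `|t| ∉ S`, list `S ∪ {|t|}` in decreasing order: consecutive
half-integers differ by at least `1`, which is `λ_i ≥ λ_{i+1}`, and the last one is at least
`1/2`, which is `λ_m ≥ 0`. -/

lemma StrictAnti.eq_of_image_univ_eq {α β : Type*} [Fintype α] [LinearOrder α]
    [WellFoundedGT α] [Preorder β] [DecidableEq β] {f g : α → β} (hf : StrictAnti f)
    (hg : StrictAnti g) (h : univ.image f = univ.image g) : f = g := by
  rw [← hf.range_inj hg, ← Set.image_univ, ← Set.image_univ, ← coe_univ, ← coe_image,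
    ← coe_image, h]

lemma Finset.exists_strictAnti_image_univ_eq {α : Type*} [LinearOrder α] {m : ℕ}
    (T : Finset α) (h : T.card = m) : ∃ f : Fin m → α, StrictAnti f ∧ univ.image f = T := by
  refine ⟨T.orderEmbOfFin h ∘ Fin.rev,
    fun i j hij => (T.orderEmbOfFin h).strictMono (Fin.rev_lt_rev.2 hij), ?_⟩
  rw [← image_image, image_univ_of_surjective Fin.rev_surjective, image_orderEmbOfFin_univ]

lemma antitone_add_coe_of_strictAnti {n : ℕ} {c : ℚ} {f : Fin n → ℚ} (hf : StrictAnti f)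
    (hf_int : ∀ i, ∃ k : ℤ, f i = k + c) : Antitone fun i => f i + (i : ℕ) := by
  cases n with
  | zero => exact fun i => i.elim0
  | succ n =>
    rw [Fin.antitone_iff_succ_le]
    intro i
    obtain ⟨p, hp⟩ := hf_int i.castSucc
    obtain ⟨q, hq⟩ := hf_int i.succ
    have hqp : (q : ℚ) < p := by linarith [hf i.castSucc_lt_succ]
    have hqp' : (q : ℚ) + 1 ≤ p := by
      exact_mod_cast Int.add_one_le_of_lt (by exact_mod_cast hqp)
    simp only [Fin.val_succ, Fin.val_castSucc, Nat.cast_succ, hp, hq]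
    linarith

lemma abs_eq_natCast_add_half {t : ℚ} (ht : ∃ n : ℤ, t = n + 1 / 2) :
    ∃ n : ℕ, |t| = n + 1 / 2 := by
  obtain ⟨n, rfl⟩ := ht
  rcases le_or_gt 0 n with hn | hn
  · refine ⟨n.toNat, ?_⟩
    rw [abs_of_nonneg (by positivity), ← Int.cast_natCast, Int.toNat_of_nonneg hn]
  · refine ⟨(-n - 1).toNat, ?_⟩
    have hn' : (n : ℚ) + 1 ≤ 0 := by exact_mod_cast hn
    rw [abs_of_neg (by linarith), ← Int.cast_natCast, Int.toNat_of_nonneg (by omega)]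
    push_cast
    ring

def tildeEquiv (m : ℕ) : Wt m ≃ Wt m where
  toFun := tilde m
  invFun v := (v.1 - 1 / 2 + m, fun i => v.2 i - m + 1 / 2 + (i : ℕ))
  left_inv lam := by ext <;> simp [tilde] <;> ring
  right_inv v := by ext <;> simp [tilde] <;> ring

section

variable {m : ℕ} {lam : Wt m}

lemma Integral.exists_tilde_fst_eq (h : Integral m lam) :
    ∃ n : ℤ, (tilde m lam).1 = n + 1 / 2 := by
  obtain ⟨n, hn⟩ := h.1
  exact ⟨n - m, by simp only [tilde, hn]; push_cast; ring⟩

lemma G0Dom.strictAnti_tilde_snd (h : G0Dom m lam) : StrictAnti (tilde m lam).2 := by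
  intro i j hij
  have hle := h.1 i j hij.le
  have hij' : ((i : ℕ) : ℚ) < (j : ℕ) := by exact_mod_cast hij
  simp only [tilde]
  linarith

lemma Atypical.image_tilde_snd (h : Atypical m lam) :
    univ.image (tilde m lam).2 = insert |(tilde m lam).1| (atypType m lam) := by
  obtain ⟨l, hl⟩ := h
  exact (insert_erase (hl ▸ mem_image_of_mem _ (mem_univ l))).symm

lemma integral_tildeEquiv_symm {t : ℚ} {f : Fin m → ℚ} (ht : ∃ n : ℤ, t = n + 1 / 2)
    (hf : ∀ i, ∃ n : ℤ, f i = n + 1 / 2) : Integral m ((tildeEquiv m).symm (t, f)) := by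
  obtain ⟨n, rfl⟩ := ht
  refine ⟨⟨n + m, ?_⟩, Or.inl fun i => ?_⟩
  · simp only [tildeEquiv, Equiv.coe_fn_symm_mk]
    push_cast
    ring
  · obtain ⟨k, hk⟩ := hf i
    refine ⟨k - m + 1 + (i : ℕ), ?_⟩
    simp only [tildeEquiv, Equiv.coe_fn_symm_mk, hk]
    push_cast
    ring

lemma g0Dom_tildeEquiv_symm {t : ℚ} {f : Fin m → ℚ} (hf : StrictAnti f)
    (hf_half : ∀ i, ∃ n : ℕ, f i = n + 1 / 2) : G0Dom m ((tildeEquiv m).symm (t, f)) := by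
  have hanti := antitone_add_coe_of_strictAnti hf fun i =>
    let ⟨n, hn⟩ := hf_half i; ⟨n, by rw [hn, Int.cast_natCast]⟩
  refine ⟨fun i j hij => ?_, fun i => ?_⟩
  · simp only [tildeEquiv, Equiv.coe_fn_symm_mk]
    linarith [hanti hij]
  · obtain ⟨n, rfl⟩ : ∃ n, m = n + 1 := Nat.exists_eq_add_one_of_ne_zero i.pos.ne'
    obtain ⟨k, hk⟩ := hf_half (Fin.last n)
    have hlast := hanti (Fin.le_last i)
    simp only [Fin.val_last, hk] at hlast
    simp only [tildeEquiv, Equiv.coe_fn_symm_mk]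
    push_cast
    linarith [(Nat.cast_nonneg k : (0 : ℚ) ≤ k)]

end

/-- Lemma 3.7(1) for `k = 2m+1`: for a set `S` of `m−1` distinct
positive half-integers, the map `λ ↦ λ̃₀` is a bijection from the set of
integral `g₀`-dominant atypical weights with atypicality type `S` onto
`{t ∈ 1/2 + ℤ : |t| ∉ S}`. -/
theorem atypical_weights_classification_B (m : ℕ) (hm : 1 ≤ m)
    (S : Finset ℚ) (hcard : S.card = m - 1)
    (hS : ∀ x ∈ S, ∃ n : ℕ, x = (n : ℚ) + 1 / 2) :
    Set.BijOn (fun lam => (tilde m lam).1)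
      {lam : Wt m |
        Integral m lam ∧ G0Dom m lam ∧ Atypical m lam ∧ atypType m lam = S}
      {t : ℚ | (∃ n : ℤ, t = (n : ℚ) + 1 / 2) ∧ |t| ∉ S} := by
  refine ⟨?_, ?_, ?_⟩
  · rintro lam ⟨hInt, -, -, rfl⟩
    exact ⟨hInt.exists_tilde_fst_eq, notMem_erase _ _⟩
  · rintro lam ⟨-, hDomL, hAtL, rfl⟩ mu ⟨-, hDomM, hAtM, hTypeM⟩ (h : (tilde m lam).1 = _)
    have hsnd := hDomL.strictAnti_tilde_snd.eq_of_image_univ_eq hDomM.strictAnti_tilde_snd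
      (by rw [hAtL.image_tilde_snd, hAtM.image_tilde_snd, h, hTypeM])
    exact (tildeEquiv m).injective (Prod.ext h hsnd)
  · rintro t ⟨ht, htS⟩
    have hTcard : (insert |t| S).card = m := by rw [card_insert_of_notMem htS, hcard]; omega
    obtain ⟨f, hf, hfT⟩ := (insert |t| S).exists_strictAnti_image_univ_eq hTcard
    have hf_half : ∀ i, ∃ n : ℕ, f i = n + 1 / 2 := fun i => by
      rcases mem_insert.1 (hfT ▸ mem_image_of_mem f (mem_univ i)) with h | h
      · exact h ▸ abs_eq_natCast_add_half ht
      · exact hS _ h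
    have hf_int : ∀ i, ∃ n : ℤ, f i = n + 1 / 2 := fun i =>
      let ⟨n, hn⟩ := hf_half i; ⟨n, by rw [hn, Int.cast_natCast]⟩
    have htilde : tilde m ((tildeEquiv m).symm (t, f)) = (t, f) :=
      (tildeEquiv m).apply_symm_apply _
    obtain ⟨l, -, hl⟩ := mem_image.1 (hfT ▸ mem_insert_self |t| S)
    refine ⟨_, ⟨integral_tildeEquiv_symm ht hf_int, g0Dom_tildeEquiv_symm hf hf_half,
      ⟨l, by rw [htilde]; exact hl.symm⟩, ?_⟩, congrArg Prod.fst htilde⟩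
    rw [atypType, htilde, hfT, erase_insert htS]
end
end

section
/- Let S be a set of m−1 distinct positive integers (so 0 ∉ S). Then the map sending λ to the pair (λ̃_0, ε), where ε = +1 if λ̃_m ≥ 0 and ε = −1 if λ̃_m < 0, is a bijection from the set of integral g_0-dominant atypical weights with atypicality type S onto the set {(t, ε) ∈ ℤ × {+1, −1} : |t| ∉ S, and ε = +1 if t = 0}. (This is the classification P^{0+}_{λ̄} = {λ^{(i)}_± : i ∈ ℤ} of Lemma 3.7(1) in the case k = 2m with 0 ∉ S(λ̄).) -/
/-!
Combinatorics of weights for the orthosymplectic Lie superalgebra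
`osp_{2m|2} = D(m,1)` (so `k = 2m`, `s = 1`), with its distinguished Borel
subalgebra.  A weight is a tuple `λ = (λ₀ | λ₁, …, λ_m) ∈ ℚ^{m+1}`, encoded
as `ℚ × (Fin m → ℚ)` (the index `i : Fin m` stands for `λ_{i+1}`).
-/

open Finset

noncomputable section

/-- The ρ-translated weight `λ̃ = λ + ρ`, with `ρ = (1−m | m−1, m−2, …, 0)`. -/
def tildeD (m : ℕ) (lam : Wt m) : Wt m :=
  (lam.1 + 1 - m, fun i => lam.2 i + (m : ℚ) - 1 - ((i : ℕ) : ℚ))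

/-- `λ` is integral: `λᵢ ∈ ℤ` for all `0 ≤ i ≤ m`. -/
def IntegralD (m : ℕ) (lam : Wt m) : Prop :=
  (∃ n : ℤ, lam.1 = (n : ℚ)) ∧ ∀ i, ∃ n : ℤ, lam.2 i = (n : ℚ)

/-- `λ` is `g₀`-dominant: `λ₁ ≥ λ₂ ≥ … ≥ λ_{m−1} ≥ |λ_m|`. -/
def G0DomD (m : ℕ) (lam : Wt m) : Prop :=
  ∀ i j : Fin m, i < j →
    (if (j : ℕ) = m - 1 then |lam.2 j| else lam.2 j) ≤ lam.2 i

/-- `λ` is atypical: `|λ̃₀| = |λ̃_ℓ|` for some `ℓ`. -/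
def AtypicalD (m : ℕ) (lam : Wt m) : Prop :=
  ∃ l : Fin m, |(tildeD m lam).1| = |(tildeD m lam).2 l|

/-- The atypicality type `S(λ̄) = {|λ̃_i| : i ≠ ℓ}` of an atypical
`g₀`-dominant weight `λ` (where `|λ̃_ℓ| = |λ̃₀|`). -/
def atypTypeD (m : ℕ) (lam : Wt m) : Finset ℚ :=
  (Finset.univ.image fun i => |(tildeD m lam).2 i|).erase |(tildeD m lam).1|

/-!
Pass to the ρ-shifted weight `v = λ̃`, a translate of `λ`. Integrality and `g₀`-dominance of
`λ` say that `v` is integral with `v_i ≥ |v_j| + (j - i)` for `i < j`; so `|v|` is a strictly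
decreasing sequence of nonnegative integers, equal to `v` except possibly in the last entry.
Atypicality of type `S` says that `|v|` takes exactly the values `S ∪ {|v₀|}`, with `|v₀| ∉ S`.
Hence `v₀` determines the sequence `|v|`, and `v` is determined by it and the sign of its last
entry. That entry is the smallest value of `|v|`, which vanishes iff `v₀ = 0` because `0 ∉ S`;
then the sign is forced to be `+1`. Conversely `(t, ε)` is realised by listing `S ∪ {|t|}` in
decreasing order and attaching `ε` to the last entry.
-/

lemma Finset.mem_and_erase_eq_iff {α : Type*} [DecidableEq α] {s t : Finset α} {a : α} :
    a ∈ s ∧ s.erase a = t ↔ a ∉ t ∧ s = insert a t := by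
  constructor
  · rintro ⟨ha, rfl⟩
    exact ⟨s.notMem_erase a, (insert_erase ha).symm⟩
  · rintro ⟨ha, rfl⟩
    exact ⟨mem_insert_self a t, erase_insert ha⟩

lemma exists_int_add_int_eq_iff (q : ℚ) (k : ℤ) :
    (∃ n : ℤ, q + k = n) ↔ ∃ n : ℤ, q = n :=
  ⟨fun ⟨n, hn⟩ => ⟨n - k, by push_cast; linarith⟩,
    fun ⟨n, hn⟩ => ⟨n + k, by push_cast; rw [hn]⟩⟩

lemma StrictAnti.add_sub_le_of_int {m : ℕ} {u : Fin m → ℚ}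
    (hint : ∀ i, ∃ n : ℤ, u i = n) (hu : StrictAnti u) {i j : Fin m} (hij : i ≤ j) :
    u j + (((j : ℕ) : ℚ) - (i : ℕ)) ≤ u i := by
  obtain ⟨d, hd⟩ : ∃ d, (j : ℕ) = i + d := ⟨j - i, by omega⟩
  induction d generalizing j with
  | zero => simp [Fin.ext (hd.trans (add_zero _))]
  | succ d ih =>
    set k : Fin m := ⟨i + d, by omega⟩
    have hk : u k + d ≤ u i := by simpa [k] using ih (j := k) (Fin.mk_le_mk.mpr (by omega)) rfl
    obtain ⟨a, ha⟩ := hint j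
    obtain ⟨b, hb⟩ := hint k
    have hab : a < b := by exact_mod_cast ha ▸ hb ▸ hu (Fin.mk_lt_mk.mpr (by omega) : k < j)
    have : (a : ℚ) + 1 ≤ b := by exact_mod_cast hab
    rw [hd]
    push_cast
    linarith

lemma Fin.cast_val_add_one_of_val_eq_sub_one {m : ℕ} {j : Fin m} (hj : (j : ℕ) = m - 1) :
    ((j : ℕ) : ℚ) + 1 = m := by
  exact_mod_cast (by omega : (j : ℕ) + 1 = m)

lemma eq_of_abs_eq_of_sign_eq {x y : ℚ} (habs : |x| = |y|)
    (hsign : (if 0 ≤ x then (1 : ℤ) else -1) = if 0 ≤ y then 1 else -1) : x = y := by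
  split_ifs at hsign with hx hy hy
  · rwa [abs_of_nonneg hx, abs_of_nonneg hy] at habs
  · rw [abs_of_neg (not_le.mp hx), abs_of_neg (not_le.mp hy)] at habs
    linarith

def tildeEquivD (m : ℕ) : Wt m ≃ Wt m where
  toFun := tildeD m
  invFun v := (v.1 - 1 + m, fun i => v.2 i - m + 1 + ((i : ℕ) : ℚ))
  left_inv lam := by ext <;> simp only [tildeD] <;> ring
  right_inv v := by ext <;> simp only [tildeD] <;> ring

lemma integralD_tildeD_iff (m : ℕ) (lam : Wt m) :
    IntegralD m (tildeD m lam) ↔ IntegralD m lam := by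
  have h₁ := exists_int_add_int_eq_iff lam.1 (1 - m)
  have h₂ := fun i : Fin m => exists_int_add_int_eq_iff (lam.2 i) (m - 1 - (i : ℕ))
  push_cast at h₁ h₂
  simp only [IntegralD, tildeD, add_sub_assoc, h₁, h₂]

/-- `g₀`-dominance of `λ`, in terms of `v = λ̃`. -/
def TildeDominantD (m : ℕ) (v : Wt m) : Prop :=
  ∀ i j : Fin m, i < j → |v.2 j| + (((j : ℕ) : ℚ) - (i : ℕ)) ≤ v.2 i

lemma tildeD_snd_of_eq_sub_one {m : ℕ} (lam : Wt m) {j : Fin m} (hj : (j : ℕ) = m - 1) :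
    (tildeD m lam).2 j = lam.2 j := by
  have := Fin.cast_val_add_one_of_val_eq_sub_one hj
  simp only [tildeD]
  linarith

lemma g0DomD_iff_tildeDominantD (m : ℕ) (lam : Wt m) :
    G0DomD m lam ↔ TildeDominantD m (tildeD m lam) := by
  have hsnd : ∀ i : Fin m, (tildeD m lam).2 i = lam.2 i + m - 1 - (i : ℕ) := fun _ => rfl
  constructor
  · intro h i j hij
    by_cases hj : (j : ℕ) = m - 1
    · have := h i j hij
      rw [if_pos hj] at this
      rw [tildeD_snd_of_eq_sub_one lam hj, hsnd i]
      linarith [Fin.cast_val_add_one_of_val_eq_sub_one hj]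
    · have hij' := h i j hij
      rw [if_neg hj] at hij'
      have hlast := h j ⟨m - 1, by omega⟩ (Fin.mk_lt_mk.mpr (by omega))
      rw [if_pos rfl] at hlast
      have hjm : ((j : ℕ) : ℚ) + 1 ≤ m := by exact_mod_cast (by omega : (j : ℕ) + 1 ≤ m)
      rw [abs_of_nonneg (by rw [hsnd]; linarith [abs_nonneg (lam.2 ⟨m - 1, by omega⟩)]),
        hsnd, hsnd]
      linarith
  · intro h i j hij
    have hij' := h i j hij
    split_ifs with hj
    · rw [tildeD_snd_of_eq_sub_one lam hj, hsnd i] at hij'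
      linarith [Fin.cast_val_add_one_of_val_eq_sub_one hj]
    · rw [hsnd, hsnd] at hij'
      linarith [le_abs_self (lam.2 j + m - 1 - (j : ℕ))]

lemma atypicalD_and_atypTypeD_eq_iff (m : ℕ) (lam : Wt m) (S : Finset ℚ) :
    AtypicalD m lam ∧ atypTypeD m lam = S ↔
      |(tildeD m lam).1| ∉ S ∧
        univ.image (fun i => |(tildeD m lam).2 i|) = insert |(tildeD m lam).1| S := by
  rw [← Finset.mem_and_erase_eq_iff, atypTypeD, AtypicalD]
  simp only [mem_image, mem_univ, true_and, eq_comm]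

namespace TildeDominantD

variable {m : ℕ} {v : Wt m}

lemma abs_eq_self_of_lt (hv : TildeDominantD m v) {i j : Fin m} (hij : i < j) :
    |v.2 i| = v.2 i := by
  have := hv i j hij
  have : ((i : ℕ) : ℚ) < (j : ℕ) := by exact_mod_cast hij
  exact abs_of_nonneg (by linarith [abs_nonneg (v.2 j)])

lemma abs_strictAnti (hv : TildeDominantD m v) : StrictAnti fun i => |v.2 i| := by
  intro i j hij
  have := hv i j hij
  have : ((i : ℕ) : ℚ) < (j : ℕ) := by exact_mod_cast hij
  simp only [abs_eq_self_of_lt hv hij]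
  linarith

end TildeDominantD

lemma tildeDominantD_of_abs_eq {m : ℕ} {v : Wt m} {u : Fin m → ℚ}
    (hint : ∀ i, ∃ n : ℤ, u i = n) (hu : StrictAnti u) (habs : ∀ i, |v.2 i| = u i)
    (heq : ∀ i j : Fin m, i < j → v.2 i = u i) : TildeDominantD m v := fun i j hij => by
  rw [habs, heq i j hij]
  exact hu.add_sub_le_of_int hint hij.le

/-- The ρ-shifted weights `λ̃` of the integral `g₀`-dominant atypical weights of type `S`. -/
def atypicalTildeSetD (m : ℕ) (S : Finset ℚ) : Set (Wt m) :=
  {v | IntegralD m v ∧ TildeDominantD m v ∧ |v.1| ∉ S ∧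
    univ.image (fun i => |v.2 i|) = insert |v.1| S}

def atypParamSetD (S : Finset ℚ) : Set (ℚ × ℤ) :=
  {p | (∃ n : ℤ, p.1 = (n : ℚ)) ∧ |p.1| ∉ S ∧ (p.2 = 1 ∨ p.2 = -1) ∧ (p.1 = 0 → p.2 = 1)}

section Classification

variable {m : ℕ} (hm : 0 < m)

def lastD : Fin m := ⟨m - 1, by omega⟩

lemma le_lastD (i : Fin m) : i ≤ lastD hm := Fin.mk_le_mk.mpr (by omega)

/-- `v = λ̃ ↦ (λ̃₀, ε)`, with `ε = ±1` the sign of `λ̃_m`. -/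
def tildeInvD (v : Wt m) : ℚ × ℤ := (v.1, if 0 ≤ v.2 (lastD hm) then 1 else -1)

lemma mapsTo_tildeInvD (S : Finset ℚ) :
    Set.MapsTo (tildeInvD hm) (atypicalTildeSetD m S) (atypParamSetD S) := by
  rintro v ⟨hint, hdom, hnot, himage⟩
  refine ⟨hint.1, hnot, by unfold tildeInvD; split_ifs <;> simp, fun h0 => ?_⟩
  obtain ⟨l, -, hl⟩ := mem_image.mp (himage ▸ mem_insert_self |v.1| S)
  have hlast : |v.2 (lastD hm)| ≤ 0 := by
    rw [show v.1 = 0 from h0, abs_zero] at hl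
    exact hl ▸ hdom.abs_strictAnti.antitone (le_lastD hm l)
  simp [tildeInvD, abs_nonpos_iff.mp hlast]

lemma injOn_tildeInvD (S : Finset ℚ) : Set.InjOn (tildeInvD hm) (atypicalTildeSetD m S) := by
  rintro v ⟨-, hv, -, hvS⟩ w ⟨-, hw, -, hwS⟩ h
  obtain ⟨h₁, hsign⟩ := Prod.mk.inj h
  have habs : (fun i => |v.2 i|) = fun i => |w.2 i| := by
    refine (hv.abs_strictAnti.range_inj hw.abs_strictAnti).mp ?_
    rw [← Set.image_univ, ← Set.image_univ, ← coe_univ, ← coe_image, ← coe_image, hvS, hwS, h₁]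
  refine Prod.ext h₁ (funext fun i => ?_)
  rcases (le_lastD hm i).lt_or_eq with hi | rfl
  · rw [← hv.abs_eq_self_of_lt hi, ← hw.abs_eq_self_of_lt hi]
    exact congrFun habs i
  · exact eq_of_abs_eq_of_sign_eq (congrFun habs _) hsign

lemma surjOn_tildeInvD {S : Finset ℚ} (hcard : S.card = m - 1)
    (hSpos : ∀ x ∈ S, ∃ n : ℕ, 0 < n ∧ x = (n : ℚ)) :
    Set.SurjOn (tildeInvD hm) (atypicalTildeSetD m S) (atypParamSetD S) := by
  rintro ⟨_, e⟩ ⟨⟨t, rfl⟩, hnot, he, ht0⟩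
  set T := insert |(t : ℚ)| S
  have hT : T.card = m := by rw [card_insert_of_notMem hnot, hcard]; omega
  have hTnat : ∀ x ∈ T, ∃ k : ℕ, x = k ∧ (x = 0 → t = 0) := by
    intro x hx
    rcases mem_insert.mp hx with rfl | hx
    · exact ⟨t.natAbs, by simp [Nat.cast_natAbs]⟩
    · obtain ⟨k, hk, rfl⟩ := hSpos x hx
      exact ⟨k, rfl, by simp [hk.ne']⟩
  set u : Fin m → ℚ := fun i => T.orderEmbOfFin hT i.rev
  have hu : StrictAnti u := (T.orderEmbOfFin hT).strictMono.comp_strictAnti Fin.rev_strictAnti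
  have huT : ∀ i, u i ∈ T := fun i => T.orderEmbOfFin_mem hT _
  have hrange : Set.range u = T := by
    rw [show u = T.orderEmbOfFin hT ∘ Fin.rev from rfl, Fin.rev_surjective.range_comp,
      range_orderEmbOfFin]
  set v : Wt m := (t, Function.update u (lastD hm) (e * u (lastD hm)))
  have habs : ∀ i, |v.2 i| = u i := by
    intro i
    obtain ⟨k, hk, -⟩ := hTnat _ (huT i)
    by_cases hi : i = lastD hm
    · subst hi
      rcases he with rfl | rfl <;> simp [v, hk]
    · simp [v, hi, hk]
  refine ⟨v, ⟨⟨⟨t, rfl⟩, fun i => ?_⟩, ?_, hnot, ?_⟩, ?_⟩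
  · obtain ⟨k, hk, -⟩ := hTnat _ (huT i)
    by_cases hi : i = lastD hm
    · subst hi
      exact ⟨e * k, by simp [v, hk]⟩
    · exact ⟨k, by simp [v, hi, hk]⟩
  · refine tildeDominantD_of_abs_eq (fun i => ?_) hu habs fun i j hij => ?_
    · obtain ⟨k, hk, -⟩ := hTnat _ (huT i)
      exact ⟨k, by simp [hk]⟩
    · simp [v, (hij.trans_le (le_lastD hm j)).ne]
  · apply coe_injective
    rw [coe_image, coe_univ, Set.image_univ, funext habs, hrange]
  · obtain ⟨k, hk, hk0⟩ := hTnat _ (huT (lastD hm))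
    refine Prod.ext rfl ?_
    rcases he with rfl | rfl
    · simp [tildeInvD, v, hk]
    · have ht : t ≠ 0 := by rintro rfl; simp at ht0
      have hk_ne : k ≠ 0 := by rintro rfl; exact ht (hk0 (by simpa using hk))
      simp [tildeInvD, v, hk, hk_ne]

lemma bijOn_tildeInvD {S : Finset ℚ} (hcard : S.card = m - 1)
    (hSpos : ∀ x ∈ S, ∃ n : ℕ, 0 < n ∧ x = (n : ℚ)) :
    Set.BijOn (tildeInvD hm) (atypicalTildeSetD m S) (atypParamSetD S) :=
  ⟨mapsTo_tildeInvD hm S, injOn_tildeInvD hm S, surjOn_tildeInvD hm hcard hSpos⟩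

end Classification

/-- Lemma 3.7(1) for `k = 2m` with `0 ∉ S(λ̄)`: for a set `S` of
`m−1` distinct positive integers, the map `λ ↦ (λ̃₀, ε)`, where `ε = +1` if
`λ̃_m ≥ 0` and `ε = −1` if `λ̃_m < 0`, is a bijection from the set of integral
`g₀`-dominant atypical weights with atypicality type `S` onto
`{(t, ε) ∈ ℤ × {+1, −1} : |t| ∉ S, and ε = +1 if t = 0}`. -/
theorem atypical_weights_classification_D_nonzero (m : ℕ) (hm : 2 ≤ m)
    (S : Finset ℚ) (hcard : S.card = m - 1)
    (hSpos : ∀ x ∈ S, ∃ n : ℕ, 0 < n ∧ x = (n : ℚ)) :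
    Set.BijOn
      (fun lam : Wt m =>
        ((tildeD m lam).1,
          if 0 ≤ (tildeD m lam).2 ⟨m - 1, by omega⟩ then (1 : ℤ) else -1))
      {lam : Wt m |
        IntegralD m lam ∧ G0DomD m lam ∧ AtypicalD m lam ∧ atypTypeD m lam = S}
      {p : ℚ × ℤ | (∃ n : ℤ, p.1 = (n : ℚ)) ∧ |p.1| ∉ S ∧
        (p.2 = 1 ∨ p.2 = -1) ∧ (p.1 = 0 → p.2 = 1)} := by
  have hweights : ∀ lam : Wt m, tildeEquivD m lam ∈ atypicalTildeSetD m S ↔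
      IntegralD m lam ∧ G0DomD m lam ∧ AtypicalD m lam ∧ atypTypeD m lam = S := by
    intro lam
    rw [atypicalTildeSetD, Set.mem_ofPred_eq, tildeEquivD, Equiv.coe_fn_mk,
      integralD_tildeD_iff, g0DomD_iff_tildeDominantD, atypicalD_and_atypTypeD_eq_iff]
  exact (bijOn_tildeInvD (by omega) hcard hSpos).comp ((tildeEquivD m).bijOn hweights)
end
end

section
/- Let S be a set of m−1 distinct positive half-integers and let a be the smallest positive half-integer not in S. Let λ^{(0)} be the weight with λ̃^{(0)} = (−a | the elements of S ∪ {a} arranged in decreasing order). Then λ^{(0)} is g-dominant, and it is the unique integral g-dominant atypical weight with atypicality type S whose atypical root is a tail atypical root (equivalently, with λ̃_0 < 0). (Lemma 3.7(2) for k = 2m+1.) -/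
/-!
Combinatorics of weights for the orthosymplectic Lie superalgebra
`osp_{2m+1|2} = B(m,1)` (so `k = 2m+1`, `s = 1/2`), with its distinguished
Borel subalgebra.  A weight is a tuple `λ = (λ₀ | λ₁, …, λ_m) ∈ ℚ^{m+1}`,
encoded as `ℚ × (Fin m → ℚ)` (the index `i : Fin m` stands for the coordinate
`λ_{i+1}`).
-/

open Finset

noncomputable section

/-!
Write `λ̃ᵢ = λᵢ + (m - i) + 1/2`. `g₀`-dominance together with `λᵢ ∈ ℤ` says exactly that
`λ̃₁ > ⋯ > λ̃_m` are positive half-integers, and if `λ̃₀ = -(n + 1/2)` the `g`-dominance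
condition says that the last `n + 1` of them are `n + 1/2, …, 1/2`. For a tail atypical weight
(where `λᵢ ∈ ℤ` is forced) this makes `|λ̃₀|` the least positive half-integer outside the
atypicality type `S`, so `λ̃` is the decreasing listing of `S ∪ {|λ̃₀|}`, which gives uniqueness.
For `λ⁽⁰⁾`, minimality of `a` puts `1/2, …, a` among the `λ̃ᵢ`, and a strictly decreasing
sequence of positive half-integers can only carry them in its last positions.
-/

section StrictAntiNat

variable {m : ℕ} {k : Fin m → ℕ}

lemma antitone_add_val_of_strictAnti (hk : StrictAnti k) : Antitone fun i => k i + (i : ℕ) := by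
  cases m with
  | zero => exact fun i => i.elim0
  | succ m =>
    refine Fin.antitone_iff_succ_le.2 fun i => ?_
    have := hk (Fin.castSucc_lt_succ (i := i))
    simp only [Fin.val_succ, Fin.val_castSucc]
    omega

lemma rev_le_of_strictAnti (hk : StrictAnti k) (i : Fin m) : (i.rev : ℕ) ≤ k i := by
  have hlast : i ≤ ⟨m - 1, by have := i.isLt; omega⟩ := Fin.le_def.2 (Nat.le_sub_one_of_lt i.isLt)
  have := antitone_add_val_of_strictAnti hk hlast
  simp only [Fin.val_rev] at this ⊢
  omega

lemma apply_eq_rev_of_le (hk : StrictAnti k) {n : ℕ} (hrange : ∀ j ≤ n, j ∈ Set.range k)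
    {p : Fin m} (hp : k p ≤ n) : k p = p.rev := by
  induction h : k p using Nat.strong_induction_on generalizing p with
  | _ v ih =>
    have hle := rev_le_of_strictAnti hk p
    by_contra hne
    obtain ⟨q, hq⟩ := hrange p.rev (by omega)
    have hqp : q = p := Fin.rev_injective (Fin.ext (by rw [← ih (k q) (by omega) (by omega) rfl, hq]))
    subst hqp
    omega

lemma lt_and_eq_rev_of_range (hk : StrictAnti k) {n : ℕ} (hrange : ∀ j ≤ n, j ∈ Set.range k) :
    n < m ∧ ∀ i : Fin m, (i.rev : ℕ) ≤ n → k i = i.rev := by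
  refine ⟨?_, fun i hi => ?_⟩
  · obtain ⟨p, hp⟩ := hrange n le_rfl
    have := apply_eq_rev_of_le hk hrange hp.le
    omega
  · obtain ⟨q, hq⟩ := hrange i.rev hi
    have hqi : q = i :=
      Fin.rev_injective (Fin.ext (by rw [← apply_eq_rev_of_le hk hrange (hq.le.trans hi), hq]))
    rw [← hqi, hq, hqi]

end StrictAntiNat

lemma lt_and_eq_rev_of_range_half {m n : ℕ} {f : Fin m → ℚ} (hf : StrictAnti f)
    (hhalf : ∀ i, ∃ k : ℕ, f i = k + 1 / 2) (hrange : ∀ j ≤ n, (j : ℚ) + 1 / 2 ∈ Set.range f) :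
    n < m ∧ ∀ i : Fin m, (i.rev : ℕ) ≤ n → f i = (i.rev : ℕ) + 1 / 2 := by
  choose k hk using hhalf
  have hk_anti : StrictAnti k := fun i j hij => by
    have := hf hij
    rw [hk, hk] at this
    exact_mod_cast (by linarith : (k j : ℚ) < k i)
  have hk_range : ∀ j ≤ n, j ∈ Set.range k := fun j hj => by
    obtain ⟨p, hp⟩ := hrange j hj
    exact ⟨p, by rw [hk] at hp; exact_mod_cast (by linarith : (k p : ℚ) = j)⟩
  obtain ⟨hnm, htail⟩ := lt_and_eq_rev_of_range hk_anti hk_range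
  exact ⟨hnm, fun i hi => by rw [hk, htail i hi]⟩

lemma add_half_ne_intCast (x y : ℤ) : (x : ℚ) + 1 / 2 ≠ y := by
  intro h
  have : (2 * x + 1 : ℤ) = 2 * y := by exact_mod_cast (by linarith : (2 * x + 1 : ℚ) = 2 * y)
  omega

section Weights

variable {m : ℕ}

lemma tilde_snd_apply (lam : Wt m) (i : Fin m) :
    (tilde m lam).2 i = lam.2 i + (i.rev : ℕ) + 1 / 2 := by
  simp only [tilde, Fin.val_rev]
  rw [Nat.cast_sub (by omega : (i : ℕ) + 1 ≤ m)]
  push_cast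
  ring

lemma tilde_injective : Function.Injective (tilde m) := by
  intro lam mu h
  obtain ⟨h1, h2⟩ := Prod.ext_iff.1 h
  refine Prod.ext (by simpa [tilde] using h1) (funext fun i => ?_)
  have := congrFun h2 i
  simp only [tilde] at this
  linarith

lemma val_rev_add_val_add_one (i : Fin m) : ((i.rev : ℕ) : ℚ) + (i : ℕ) + 1 = m := by
  have : (i.rev : ℕ) + i + 1 = m := by simp only [Fin.val_rev]; omega
  exact_mod_cast this

lemma g0Dom_and_int_iff {lam : Wt m} :
    (G0Dom m lam ∧ ∀ i, ∃ z : ℤ, lam.2 i = z) ↔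
      StrictAnti (tilde m lam).2 ∧ ∀ i, ∃ k : ℕ, (tilde m lam).2 i = k + 1 / 2 := by
  constructor
  · rintro ⟨⟨hanti, hnonneg⟩, hint⟩
    choose z hz using hint
    refine ⟨fun i j hij => ?_, fun i => ⟨(z i).toNat + i.rev, ?_⟩⟩
    · have hrev : ((j.rev : ℕ) : ℚ) < (i.rev : ℕ) := by exact_mod_cast Fin.rev_lt_rev.2 hij
      rw [tilde_snd_apply, tilde_snd_apply]
      linarith [hanti i j hij.le]
    · have hz_nonneg : 0 ≤ z i := by exact_mod_cast hz i ▸ hnonneg i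
      have hcast : (((z i).toNat : ℤ) : ℚ) = z i := by rw [Int.toNat_of_nonneg hz_nonneg]
      push_cast at hcast
      rw [tilde_snd_apply, hz i, Nat.cast_add, hcast]
  · rintro ⟨hanti, hhalf⟩
    choose k hk using hhalf
    have hk_anti : StrictAnti k := fun i j hij => by
      have := hanti hij
      rw [hk, hk] at this
      exact_mod_cast (by linarith : (k j : ℚ) < k i)
    have hlam : ∀ i, lam.2 i = k i - (i.rev : ℕ) := fun i => by
      linarith [hk i, tilde_snd_apply lam i]
    refine ⟨⟨fun i j hij => ?_, fun i => ?_⟩, fun i => ⟨k i - (i.rev : ℕ), by rw [hlam]; push_cast; rfl⟩⟩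
    · have hadd : ((k j + (j : ℕ) : ℕ) : ℚ) ≤ (k i + (i : ℕ) : ℕ) := by
        exact_mod_cast antitone_add_val_of_strictAnti hk_anti hij
      push_cast at hadd
      rw [hlam, hlam]
      linarith [val_rev_add_val_add_one i, val_rev_add_val_add_one j]
    · rw [hlam, sub_nonneg]
      exact_mod_cast rev_le_of_strictAnti hk_anti i

lemma tail_iff_of_tilde_fst {lam : Wt m} {n : ℕ} (h0 : (tilde m lam).1 = -((n : ℚ) + 1 / 2)) :
    (∀ i : Fin m, lam.1 < (i : ℕ) + 1 → lam.2 i = 0) ↔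
      ∀ i : Fin m, (i.rev : ℕ) ≤ n → (tilde m lam).2 i = (i.rev : ℕ) + 1 / 2 := by
  have hfst : lam.1 = m - 1 - n := by simp only [tilde] at h0; linarith
  refine forall_congr' fun i => ?_
  have hlt : lam.1 < (i : ℕ) + 1 ↔ (i.rev : ℕ) ≤ n := by
    rw [hfst, ← Nat.lt_add_one_iff, ← Nat.cast_lt (α := ℚ)]
    constructor <;> intro h <;> push_cast at * <;> linarith [val_rev_add_val_add_one i]
  rw [hlt, tilde_snd_apply]
  constructor <;> intro h hi <;> linarith [h hi]

lemma gDom_iff_of_tilde_fst {lam : Wt m} {n : ℕ} (h0 : (tilde m lam).1 = -((n : ℚ) + 1 / 2))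
    (hint : ∀ i, ∃ z : ℤ, lam.2 i = z) :
    GDom m lam ↔ G0Dom m lam ∧ n < m ∧
      ∀ i : Fin m, (i.rev : ℕ) ≤ n → (tilde m lam).2 i = (i.rev : ℕ) + 1 / 2 := by
  have hfst : lam.1 = m - 1 - n := by simp only [tilde] at h0; linarith
  have hintegral : Integral m lam := ⟨⟨m - 1 - n, by rw [hfst]; push_cast; ring⟩, Or.inl hint⟩
  have hnonneg : 0 ≤ lam.1 ↔ n < m := by
    rw [hfst, ← Nat.add_one_le_iff, ← Nat.cast_le (α := ℚ)]
    push_cast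
    constructor <;> intro h <;> linarith
  simp only [GDom, hintegral, true_and, hnonneg, tail_iff_of_tilde_fst h0]

end Weights

section TailAtypical

variable {m : ℕ} {mu : Wt m}

lemma Atypical.abs_mem_image (hA : Atypical m mu) :
    |(tilde m mu).1| ∈ univ.image (tilde m mu).2 :=
  let ⟨l, hl⟩ := hA
  mem_image.2 ⟨l, mem_univ l, hl.symm⟩

/-- `λ̃₀ ∈ ℤ + 1/2`, so `λ̃_ℓ = ±λ̃₀` forces `λ_ℓ ∈ ℤ`, ruling out the half-integral case. -/
lemma Atypical.int_of_integral (hA : Atypical m mu) (hI : Integral m mu) :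
    ∀ i, ∃ z : ℤ, mu.2 i = z := by
  obtain ⟨⟨z₀, hz₀⟩, hint | hhalf⟩ := hI
  · exact hint
  exfalso
  obtain ⟨l, hl⟩ := hA
  obtain ⟨z, hz⟩ := hhalf l
  rw [tilde_snd_apply, hz] at hl
  simp only [tilde, hz₀] at hl
  rcases abs_choice ((z₀ : ℚ) + 1 / 2 - m) with h | h <;> rw [h] at hl
  · exact add_half_ne_intCast (z₀ - m) (z + l.rev + 1) (by push_cast; linarith)
  · exact add_half_ne_intCast (z₀ - m + z + l.rev + 1) 0 (by push_cast; linarith)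

lemma exists_tilde_of_gDom_of_atypical (hG : GDom m mu) (hA : Atypical m mu)
    (hneg : (tilde m mu).1 < 0) :
    ∃ n : ℕ, (tilde m mu).1 = -((n : ℚ) + 1 / 2) ∧ StrictAnti (tilde m mu).2 ∧ n < m ∧
      ∀ i : Fin m, (i.rev : ℕ) ≤ n → (tilde m mu).2 i = (i.rev : ℕ) + 1 / 2 := by
  have hint := hA.int_of_integral hG.1
  obtain ⟨hanti, hhalf⟩ := g0Dom_and_int_iff.1 ⟨hG.2.1, hint⟩
  obtain ⟨l, hl⟩ := hA
  obtain ⟨n, hn⟩ := hhalf l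
  have h0 : (tilde m mu).1 = -((n : ℚ) + 1 / 2) := by rw [abs_of_neg hneg] at hl; linarith
  exact ⟨n, h0, hanti, ((gDom_iff_of_tilde_fst h0 hint).1 hG).2⟩

/-- The tail condition puts `1/2, …, n + 1/2` among the `λ̃ᵢ`, and of these only
`n + 1/2 = |λ̃₀|` is erased in the atypicality type. -/
lemma isLeast_neg_tilde_fst (hG : GDom m mu) (hA : Atypical m mu) (hneg : (tilde m mu).1 < 0) :
    IsLeast {b : ℚ | (∃ n : ℕ, b = n + 1 / 2) ∧ b ∉ atypType m mu} (-(tilde m mu).1) := by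
  obtain ⟨n, h0, -, hnm, htail⟩ := exists_tilde_of_gDom_of_atypical hG hA hneg
  have habs : |(tilde m mu).1| = n + 1 / 2 := by rw [abs_of_neg hneg, h0, neg_neg]
  rw [h0, neg_neg]
  refine ⟨⟨⟨n, rfl⟩, habs ▸ notMem_erase _ _⟩, ?_⟩
  rintro _ ⟨⟨j, rfl⟩, hj⟩
  by_contra hlt
  have hjn : j < n := by exact_mod_cast (by linarith : (j : ℚ) < n)
  set i : Fin m := (⟨j, by omega⟩ : Fin m).rev
  have hi : (tilde m mu).2 i = j + 1 / 2 := by rw [htail i (by simp [i]; omega)]; simp [i]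
  exact hj (mem_erase.2 ⟨by rw [habs]; intro h; linarith, mem_image.2 ⟨i, mem_univ i, hi⟩⟩)

theorem eq_of_gDom_of_atypType_eq {nu : Wt m}
    (hGm : GDom m mu) (hAm : Atypical m mu) (hnegm : (tilde m mu).1 < 0)
    (hGn : GDom m nu) (hAn : Atypical m nu) (hnegn : (tilde m nu).1 < 0)
    (hT : atypType m mu = atypType m nu) : mu = nu := by
  have hfst : (tilde m mu).1 = (tilde m nu).1 := by
    have := (isLeast_neg_tilde_fst hGm hAm hnegm).unique (hT ▸ isLeast_neg_tilde_fst hGn hAn hnegn)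
    linarith
  have himage : univ.image (tilde m mu).2 = univ.image (tilde m nu).2 := by
    rw [← insert_erase hAm.abs_mem_image, ← insert_erase hAn.abs_mem_image]
    change insert _ (atypType m mu) = insert _ (atypType m nu)
    rw [hfst, hT]
  obtain ⟨-, -, hanti_mu, -⟩ := exists_tilde_of_gDom_of_atypical hGm hAm hnegm
  obtain ⟨-, -, hanti_nu, -⟩ := exists_tilde_of_gDom_of_atypical hGn hAn hnegn
  have hsnd : (tilde m mu).2 = (tilde m nu).2 :=
    (hanti_mu.range_inj hanti_nu).1 (by simpa using congrArg ((↑) : Finset ℚ → Set ℚ) himage)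
  exact tilde_injective (Prod.ext hfst hsnd)

end TailAtypical

theorem gDom_of_tilde_image {m n : ℕ} {lam : Wt m} {S : Finset ℚ}
    (hS : ∀ x ∈ S, ∃ k : ℕ, x = (k : ℚ) + 1 / 2)
    (hmin : ∀ b : ℚ, (∃ k : ℕ, b = (k : ℚ) + 1 / 2) → b ∉ S → (n : ℚ) + 1 / 2 ≤ b)
    (h1 : (tilde m lam).1 = -((n : ℚ) + 1 / 2))
    (h2 : univ.image (tilde m lam).2 = insert ((n : ℚ) + 1 / 2) S)
    (h3 : StrictAnti (tilde m lam).2) : GDom m lam := by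
  have hhalf : ∀ i, ∃ k : ℕ, (tilde m lam).2 i = k + 1 / 2 := fun i => by
    rcases mem_insert.1 (h2 ▸ mem_image_of_mem _ (mem_univ i)) with h | h
    exacts [⟨n, h⟩, hS _ h]
  have hrange : ∀ j ≤ n, (j : ℚ) + 1 / 2 ∈ Set.range (tilde m lam).2 := fun j hj => by
    suffices (j : ℚ) + 1 / 2 ∈ insert ((n : ℚ) + 1 / 2) S by
      obtain ⟨i, -, hi⟩ := mem_image.1 (h2 ▸ this)
      exact ⟨i, hi⟩
    rcases hj.eq_or_lt with rfl | hlt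
    · exact mem_insert_self _ _
    · refine mem_insert_of_mem (by_contra fun hjS => ?_)
      have := hmin _ ⟨j, rfl⟩ hjS
      have : (j : ℚ) < n := by exact_mod_cast hlt
      linarith
  obtain ⟨hnm, htail⟩ := lt_and_eq_rev_of_range_half h3 hhalf hrange
  obtain ⟨hG0, hint⟩ := g0Dom_and_int_iff.2 ⟨h3, hhalf⟩
  exact (gDom_iff_of_tilde_fst h1 hint).2 ⟨hG0, hnm, htail⟩

theorem lambda0_unique_tail_dominant_general (m : ℕ)
    (S : Finset ℚ)
    (hS : ∀ x ∈ S, ∃ n : ℕ, x = (n : ℚ) + 1 / 2)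
    (a : ℚ) (ha : ∃ n : ℕ, a = (n : ℚ) + 1 / 2) (haS : a ∉ S)
    (hmin : ∀ b : ℚ, (∃ n : ℕ, b = (n : ℚ) + 1 / 2) → b ∉ S → a ≤ b)
    (lam0 : Wt m)
    (h1 : (tilde m lam0).1 = -a)
    (h2 : (Finset.univ.image fun i => (tilde m lam0).2 i) = insert a S)
    (h3 : ∀ i j : Fin m, i < j → (tilde m lam0).2 j < (tilde m lam0).2 i) :
    GDom m lam0 ∧ Atypical m lam0 ∧ atypType m lam0 = S ∧
      (tilde m lam0).1 < 0 ∧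
      ∀ mu : Wt m, GDom m mu → Atypical m mu → atypType m mu = S →
        (tilde m mu).1 < 0 → mu = lam0 := by
  obtain ⟨n, rfl⟩ := ha
  have hG : GDom m lam0 := gDom_of_tilde_image hS hmin h1 h2 h3
  have habs : |(tilde m lam0).1| = n + 1 / 2 := by rw [h1, abs_neg, abs_of_pos (by positivity)]
  have hA : Atypical m lam0 := by
    obtain ⟨l, -, hl⟩ := mem_image.1 (h2 ▸ mem_insert_self _ S)
    exact ⟨l, habs.trans hl.symm⟩
  have hT : atypType m lam0 = S := by rw [atypType, habs, h2, erase_insert haS]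
  have hneg : (tilde m lam0).1 < 0 := by rw [h1]; linarith
  exact ⟨hG, hA, hT, hneg, fun mu hGm hAm hTm hnegm =>
    eq_of_gDom_of_atypType_eq hGm hAm hnegm hG hA hneg (hTm.trans hT.symm)⟩

/-- Lemma 3.7(2) for `k = 2m+1`: let `S` be a set of `m−1`
distinct positive half-integers and `a` the smallest positive half-integer not
in `S`.  Let `λ⁽⁰⁾` be the weight with
`λ̃⁽⁰⁾ = (−a | the elements of S ∪ {a} in decreasing order)`.  Then `λ⁽⁰⁾` is
`g`-dominant, and it is the unique integral `g`-dominant atypical weight with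
atypicality type `S` whose atypical root is a tail atypical root
(equivalently, with `λ̃₀ < 0`). -/
theorem lambda0_unique_tail_dominant (m : ℕ) (hm : 1 ≤ m)
    (S : Finset ℚ) (hcard : S.card = m - 1)
    (hS : ∀ x ∈ S, ∃ n : ℕ, x = (n : ℚ) + 1 / 2)
    (a : ℚ) (ha : ∃ n : ℕ, a = (n : ℚ) + 1 / 2) (haS : a ∉ S)
    (hmin : ∀ b : ℚ, (∃ n : ℕ, b = (n : ℚ) + 1 / 2) → b ∉ S → a ≤ b)
    (lam0 : Wt m)
    (h1 : (tilde m lam0).1 = -a)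
    (h2 : (Finset.univ.image fun i => (tilde m lam0).2 i) = insert a S)
    (h3 : ∀ i j : Fin m, i < j → (tilde m lam0).2 j < (tilde m lam0).2 i) :
    GDom m lam0 ∧ Atypical m lam0 ∧ atypType m lam0 = S ∧
      (tilde m lam0).1 < 0 ∧
      ∀ mu : Wt m, GDom m mu → Atypical m mu → atypType m mu = S →
        (tilde m mu).1 < 0 → mu = lam0 :=
  lambda0_unique_tail_dominant_general m S hS a ha haS hmin lam0 h1 h2 h3

end
end

section
/- Let S be a set of m−1 distinct positive half-integers and let a be the smallest positive half-integer not in S. An integral g_0-dominant atypical weight μ with atypicality type S is g-dominant if and only if μ̃_0 > 0 or μ̃_0 = −a. (This is the description P^{+}_{λ̄} = {λ^{(i)} : i ∈ ℤ≥0} of Lemma 3.7(1) for k = 2m+1.) -/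
/-!
Combinatorics of weights for the orthosymplectic Lie superalgebra
`osp_{2m+1|2} = B(m,1)` (so `k = 2m+1`, `s = 1/2`), with its distinguished
Borel subalgebra.  A weight is a tuple `λ = (λ₀ | λ₁, …, λ_m) ∈ ℚ^{m+1}`,
encoded as `ℚ × (Fin m → ℚ)` (the index `i : Fin m` stands for the coordinate
`λ_{i+1}`).
-/

open Finset

noncomputable section

/-!
Write `ρ_j = m + 1/2 - j` for `1 ≤ j ≤ m`, so that `λ̃_j = λ_j + ρ_j ≥ ρ_j` with equality iff
`λ_j = 0`; the `ρ_j` are exactly the positive half-integers below `m`. Since `|λ̃₀| = λ̃_ℓ ≥ 1/2`,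
`λ̃₀ > 0` forces `λ₀ ≥ m`, where `g`-dominance is automatic. If `λ̃₀ < 0`, then
`|λ̃₀| = ρ_{λ₀+1}` and `g`-dominance says `λ̃_j = ρ_j` for `j > λ₀`: these are all the positive
half-integers below `|λ̃₀|`, so they lie in `S` and `|λ̃₀|` is the least one outside `S`.
Conversely, if `λ̃₀ = -a = -λ̃_ℓ`, then `λ_j = 0` for `j ≥ ℓ` by downward induction: otherwise
`ρ_j < λ̃_j ≤ a` puts `ρ_j` in `S`, so `ρ_j = λ̃_i = ρ_i` for some `i > j`, which is absurd.
-/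

def IsPosHalfInt (x : ℚ) : Prop := ∃ n : ℕ, x = (n : ℚ) + 1 / 2

lemma IsPosHalfInt.half_le {x : ℚ} (hx : IsPosHalfInt x) : 1 / 2 ≤ x := by
  obtain ⟨n, rfl⟩ := hx
  linarith [n.cast_nonneg (α := ℚ)]

lemma IsPosHalfInt.pos {x : ℚ} (hx : IsPosHalfInt x) : 0 < x := by
  linarith [hx.half_le]

lemma isPosHalfInt_abs_intCast_add_half (k : ℤ) : IsPosHalfInt |(k : ℚ) + 1 / 2| := by
  cases k with
  | ofNat n =>
    refine ⟨n, ?_⟩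
    rw [Int.ofNat_eq_natCast, Int.cast_natCast, abs_of_nonneg (by positivity)]
  | negSucc n =>
    refine ⟨n, ?_⟩
    rw [Int.cast_negSucc, abs_of_neg (by push_cast; linarith [n.cast_nonneg (α := ℚ)])]
    push_cast
    ring

/-- `rho m j` is `ρ_{j+1}`, as `Fin m` counts the coordinates `1, …, m` from `0`. -/
def rho (m : ℕ) (j : Fin m) : ℚ := m - 1 / 2 - j

lemma rho_strictAnti (m : ℕ) : StrictAnti (rho m) := fun i j hij => by
  have : ((i : ℕ) : ℚ) < (j : ℕ) := by exact_mod_cast hij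
  simp only [rho]
  linarith

lemma isPosHalfInt_rho {m : ℕ} (j : Fin m) : IsPosHalfInt (rho m j) := by
  obtain ⟨k, hk⟩ := Nat.exists_eq_add_of_lt j.isLt
  refine ⟨k, ?_⟩
  simp only [rho, hk]
  push_cast
  ring

lemma exists_rho_eq {m : ℕ} {x : ℚ} (hx : IsPosHalfInt x) (hxm : x < m) :
    ∃ j : Fin m, rho m j = x := by
  obtain ⟨n, rfl⟩ := hx
  have hn : n < m := by exact_mod_cast (show (n : ℚ) < m by linarith)
  obtain ⟨k, rfl⟩ := Nat.exists_eq_add_of_lt hn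
  refine ⟨⟨k, by omega⟩, ?_⟩
  simp only [rho]
  push_cast
  ring

lemma tilde_fst {m : ℕ} (lam : Wt m) : (tilde m lam).1 = lam.1 + 1 / 2 - m := rfl

lemma tilde_snd {m : ℕ} (lam : Wt m) (j : Fin m) : (tilde m lam).2 j = lam.2 j + rho m j := by
  simp only [tilde, rho]
  ring

lemma Integral.isPosHalfInt_abs_tilde_fst {m : ℕ} {lam : Wt m} (h : Integral m lam) :
    IsPosHalfInt |(tilde m lam).1| := by
  obtain ⟨z, hz⟩ := h.1
  convert isPosHalfInt_abs_intCast_add_half (z - m) using 2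
  rw [tilde_fst, hz]
  push_cast
  ring

lemma mem_atypType {m : ℕ} {lam : Wt m} {x : ℚ} :
    x ∈ atypType m lam ↔ x ≠ |(tilde m lam).1| ∧ ∃ i, (tilde m lam).2 i = x := by
  simp [atypType]

namespace G0Dom

variable {m : ℕ} {lam : Wt m} (h : G0Dom m lam)
include h

lemma rho_le_tilde_snd (j : Fin m) : rho m j ≤ (tilde m lam).2 j := by
  linarith [tilde_snd lam j, h.2 j]

lemma rho_lt_tilde_snd {j : Fin m} (hj : lam.2 j ≠ 0) : rho m j < (tilde m lam).2 j := by
  linarith [tilde_snd lam j, lt_of_le_of_ne (h.2 j) (Ne.symm hj)]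

lemma half_le_tilde_snd (j : Fin m) : 1 / 2 ≤ (tilde m lam).2 j :=
  (isPosHalfInt_rho j).half_le.trans (h.rho_le_tilde_snd j)

lemma tilde_snd_strictAnti : StrictAnti (tilde m lam).2 := fun i j hij => by
  rw [tilde_snd, tilde_snd]
  linarith [h.1 i j hij.le, rho_strictAnti m hij]

lemma snd_eq_zero_of_le {l : Fin m}
    (hfill : ∀ b, IsPosHalfInt b → b < (tilde m lam).2 l → ∃ i, (tilde m lam).2 i = b) :
    ∀ j, l ≤ j → lam.2 j = 0 := by
  intro j
  induction j using WellFoundedGT.induction with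
  | _ j ih =>
    intro hlj
    by_contra hj
    have hrho_lt : rho m j < (tilde m lam).2 j := h.rho_lt_tilde_snd hj
    obtain ⟨i, hi⟩ := hfill _ (isPosHalfInt_rho j)
      (hrho_lt.trans_le (h.tilde_snd_strictAnti.antitone hlj))
    have hji : j < i := h.tilde_snd_strictAnti.lt_iff_gt.mp (hi ▸ hrho_lt)
    have hi_zero : lam.2 i = 0 := ih i hji (hlj.trans hji.le)
    rw [tilde_snd, hi_zero, zero_add] at hi
    exact (rho_strictAnti m hji).ne hi

end G0Dom

lemma GDom.exists_tilde_snd_eq {m : ℕ} {lam : Wt m} (h : GDom m lam) {b : ℚ}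
    (hb : IsPosHalfInt b) (hlt : b < -(tilde m lam).1) : ∃ j, (tilde m lam).2 j = b := by
  obtain ⟨-, -, hfst, htail⟩ := h
  rw [tilde_fst] at hlt
  obtain ⟨j, rfl⟩ := exists_rho_eq hb (by linarith)
  refine ⟨j, ?_⟩
  rw [tilde_snd, htail j (by simp only [rho] at hlt; linarith), zero_add]

lemma gDom_of_tilde_fst_pos {m : ℕ} {lam : Wt m} (hInt : Integral m lam) (hdom : G0Dom m lam)
    (hatyp : Atypical m lam) (hpos : 0 < (tilde m lam).1) : GDom m lam := by
  obtain ⟨l, hl⟩ := hatyp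
  have hhalf : 1 / 2 ≤ (tilde m lam).1 := abs_of_pos hpos ▸ hl ▸ hdom.half_le_tilde_snd l
  rw [tilde_fst] at hhalf
  refine ⟨hInt, hdom, by linarith [m.cast_nonneg (α := ℚ)], fun i hi => ?_⟩
  linarith [show ((i : ℕ) : ℚ) + 1 ≤ m by exact_mod_cast i.isLt]

lemma gDom_of_tilde_fst_eq_neg {m : ℕ} {lam : Wt m} (hInt : Integral m lam)
    (hdom : G0Dom m lam) {l : Fin m} (hl : (tilde m lam).1 = -(tilde m lam).2 l)
    (hfill : ∀ b, IsPosHalfInt b → b < (tilde m lam).2 l → ∃ i, (tilde m lam).2 i = b) :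
    GDom m lam := by
  have hzero := hdom.snd_eq_zero_of_le hfill
  have hfst : lam.1 = (l : ℕ) := by
    rw [tilde_fst, tilde_snd, hzero l le_rfl] at hl
    simp only [rho] at hl
    linarith
  refine ⟨hInt, hdom, hfst ▸ Nat.cast_nonneg _, fun i hi => hzero i ?_⟩
  have : (l : ℕ) < i + 1 := by exact_mod_cast hfst ▸ hi
  exact Fin.le_iff_val_le_val.mpr (by omega)

theorem gDominant_iff_tilde0_general (m : ℕ)
    (S : Finset ℚ)
    (a : ℚ) (ha : ∃ n : ℕ, a = (n : ℚ) + 1 / 2) (haS : a ∉ S)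
    (hmin : ∀ b : ℚ, (∃ n : ℕ, b = (n : ℚ) + 1 / 2) → b ∉ S → a ≤ b)
    (mu : Wt m) (hInt : Integral m mu) (hdom : G0Dom m mu)
    (hatyp : Atypical m mu) (htype : atypType m mu = S) :
    GDom m mu ↔ (0 < (tilde m mu).1 ∨ (tilde m mu).1 = -a) := by
  have hmemS : ∀ x, x ∈ S ↔ x ≠ |(tilde m mu).1| ∧ ∃ i, (tilde m mu).2 i = x := fun x =>
    htype ▸ mem_atypType
  have ha_le : a ≤ |(tilde m mu).1| :=
    hmin _ hInt.isPosHalfInt_abs_tilde_fst fun h => ((hmemS _).mp h).1 rfl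
  constructor
  · intro hG
    refine (lt_or_ge 0 (tilde m mu).1).imp id fun hnonpos => ?_
    have habs : |(tilde m mu).1| = -(tilde m mu).1 := abs_of_nonpos hnonpos
    obtain hlt | heq := ha_le.lt_or_eq
    · obtain ⟨j, hj⟩ := hG.exists_tilde_snd_eq ha (habs ▸ hlt)
      exact absurd ((hmemS a).mpr ⟨hlt.ne, j, hj⟩) haS
    · linarith
  · obtain ⟨l, hl⟩ := hatyp
    rintro (hpos | hneg)
    · exact gDom_of_tilde_fst_pos hInt hdom ⟨l, hl⟩ hpos
    · have hla : (tilde m mu).2 l = a := by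
        rw [← hl, hneg, abs_neg, abs_of_pos (IsPosHalfInt.pos ha)]
      refine gDom_of_tilde_fst_eq_neg hInt hdom (hla ▸ hneg) fun b hb hlt => ?_
      by_contra hnot
      exact (hla ▸ hlt).not_ge (hmin b hb fun hS => hnot ((hmemS b).mp hS).2)

/-- the description `P⁺_{λ̄} = {λ⁽ⁱ⁾ : i ∈ ℤ≥0}` of Lemma 3.7(1)
for `k = 2m+1`: let `S` be a set of `m−1` distinct positive half-integers and
`a` the smallest positive half-integer not in `S`.  An integral `g₀`-dominant
atypical weight `μ` with atypicality type `S` is `g`-dominant if and only if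
`μ̃₀ > 0` or `μ̃₀ = −a`. -/
theorem gDominant_iff_tilde0 (m : ℕ) (hm : 1 ≤ m)
    (S : Finset ℚ) (hcard : S.card = m - 1)
    (hS : ∀ x ∈ S, ∃ n : ℕ, x = (n : ℚ) + 1 / 2)
    (a : ℚ) (ha : ∃ n : ℕ, a = (n : ℚ) + 1 / 2) (haS : a ∉ S)
    (hmin : ∀ b : ℚ, (∃ n : ℕ, b = (n : ℚ) + 1 / 2) → b ∉ S → a ≤ b)
    (mu : Wt m) (hInt : Integral m mu) (hdom : G0Dom m mu)
    (hatyp : Atypical m mu) (htype : atypType m mu = S) :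
    GDom m mu ↔ (0 < (tilde m mu).1 ∨ (tilde m mu).1 = -a) :=
  gDominant_iff_tilde0_general m S a ha haS hmin mu hInt hdom hatyp htype
end
end

section
/- For every integral g_0-dominant atypical weight λ, one has (λ^σ)^ = (λˇ)^σ and (λ^σ)ˇ = (λ^)^σ. (Identity (2.13) of the paper, for k = 2m+1, where λ̃_0 ≠ 0 holds automatically.) -/
/-!
Combinatorics of weights for the orthosymplectic Lie superalgebra
`osp_{2m+1|2} = B(m,1)` (so `k = 2m+1`, `s = 1/2`), with its distinguished
Borel subalgebra.  A weight is a tuple `λ = (λ₀ | λ₁, …, λ_m) ∈ ℚ^{m+1}`,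
encoded as `ℚ × (Fin m → ℚ)` (the index `i : Fin m` stands for the coordinate
`λ_{i+1}`).
-/

open Finset

noncomputable section

/-! `σ` changes only `λ₀` and negates `λ̃₀`. Hence it sends the atypical root `δ ± ε_ℓ` of `λ`
to the atypical root `δ ∓ ε_ℓ` of `λ^σ`, turns `λ - aγ` into `λ^σ + aγ^σ`, preserves regularity
and commutes with taking the dominant conjugate. So `σ` carries the data defining `λˇ` to data
defining `(λ^σ)^` and vice versa, and both identities follow from the uniqueness of `λ^` and `λˇ`:
for `g₀`-dominant `λ` the atypical root is unique, and `a₊`, `a₋` are minimal. -/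

section

variable {m : ℕ}

def negEps (γ : Wt m) : Wt m := (γ.1, -γ.2)

lemma negEps_deltaW_add_epsW (l : Fin m) : negEps (deltaW m + epsW l) = deltaW m - epsW l := by
  ext <;> simp [negEps, deltaW, epsW]

lemma negEps_deltaW_sub_epsW (l : Fin m) : negEps (deltaW m - epsW l) = deltaW m + epsW l := by
  ext <;> simp [negEps, deltaW, epsW]

lemma tilde_sigmaW (lam : Wt m) :
    tilde m (sigmaW m lam) = (-(tilde m lam).1, (tilde m lam).2) :=
  Prod.ext (by simp only [tilde, sigmaW]; ring) rfl

lemma sigmaW_sub_smul (lam γ : Wt m) (c : ℚ) :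
    sigmaW m (lam - c • γ) = sigmaW m lam + c • negEps γ := by
  ext
  · simp only [sigmaW, negEps, Prod.fst_add, Prod.fst_sub, Prod.smul_fst, smul_eq_mul]
    ring
  · simp [sigmaW, negEps, sub_eq_add_neg]

lemma sigmaW_add_smul (lam γ : Wt m) (c : ℚ) :
    sigmaW m (lam + c • γ) = sigmaW m lam - c • negEps γ := by
  ext
  · simp only [sigmaW, negEps, Prod.fst_add, Prod.fst_sub, Prod.smul_fst, smul_eq_mul]
    ring
  · simp [sigmaW, negEps, sub_eq_add_neg]

lemma AtypRoot.sigmaW {lam γ : Wt m} (h : AtypRoot m lam γ) :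
    AtypRoot m (sigmaW m lam) (negEps γ) := by
  obtain ⟨l, ⟨rfl, he⟩ | ⟨rfl, he⟩⟩ := h
  · exact ⟨l, .inr ⟨negEps_deltaW_add_epsW l, by simp [tilde_sigmaW, he]⟩⟩
  · exact ⟨l, .inl ⟨negEps_deltaW_sub_epsW l, by simp [tilde_sigmaW, he]⟩⟩

lemma IsPlus.sigmaW {mu nu : Wt m} (h : IsPlus m mu nu) :
    IsPlus m (sigmaW m mu) (sigmaW m nu) := by
  obtain ⟨hdom, w, hw⟩ := h
  refine ⟨hdom, w, ?_⟩
  rw [tilde_sigmaW, tilde_sigmaW, hw]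
  rfl

lemma regular_sigmaW_iff {nu : Wt m} : Regular m (sigmaW m nu) ↔ Regular m nu := Iff.rfl

lemma G0Dom.sigmaW {nu : Wt m} (h : G0Dom m nu) : G0Dom m (sigmaW m nu) := h

lemma IsCheck.sigmaW_isHat {lam nu : Wt m} (h : IsCheck m lam nu) :
    IsHat m (sigmaW m lam) (sigmaW m nu) := by
  obtain ⟨γ, hγ, a, ha, hreg, hmin, hplus⟩ := h
  refine ⟨negEps γ, hγ.sigmaW, a, ha, ?_, fun b hb hba hr => hmin b hb hba ?_, ?_⟩
  · rwa [← sigmaW_sub_smul, regular_sigmaW_iff]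
  · rwa [← sigmaW_sub_smul, regular_sigmaW_iff] at hr
  · rw [← sigmaW_sub_smul]; exact hplus.sigmaW

lemma IsHat.sigmaW_isCheck {lam nu : Wt m} (h : IsHat m lam nu) :
    IsCheck m (sigmaW m lam) (sigmaW m nu) := by
  obtain ⟨γ, hγ, a, ha, hreg, hmin, hplus⟩ := h
  refine ⟨negEps γ, hγ.sigmaW, a, ha, ?_, fun b hb hba hr => hmin b hb hba ?_, ?_⟩
  · rwa [← sigmaW_add_smul, regular_sigmaW_iff]
  · rwa [← sigmaW_add_smul, regular_sigmaW_iff] at hr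
  · rw [← sigmaW_add_smul]; exact hplus.sigmaW

lemma G0Dom.tilde_snd_strictAnti_s9 {nu : Wt m} (h : G0Dom m nu) : StrictAnti (tilde m nu).2 := by
  intro i j hij
  have hnu : nu.2 j ≤ nu.2 i := h.1 i j hij.le
  have hij' : ((i : ℕ) : ℚ) < ((j : ℕ) : ℚ) := by exact_mod_cast hij
  simp only [tilde]
  linarith

lemma G0Dom.tilde_snd_pos {nu : Wt m} (h : G0Dom m nu) (i : Fin m) : 0 < (tilde m nu).2 i := by
  have hnu : 0 ≤ nu.2 i := h.2 i
  have hi : ((i : ℕ) : ℚ) + 1 ≤ (m : ℚ) := by exact_mod_cast i.isLt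
  simp only [tilde]
  linarith

lemma AtypRoot.unique {mu γ γ' : Wt m} (hdom : G0Dom m mu)
    (h : AtypRoot m mu γ) (h' : AtypRoot m mu γ') : γ = γ' := by
  have hinj := hdom.tilde_snd_strictAnti_s9.injective
  obtain ⟨l, ⟨rfl, he⟩ | ⟨rfl, he⟩⟩ := h <;> obtain ⟨l', ⟨rfl, he'⟩ | ⟨rfl, he'⟩⟩ := h'
  · rw [hinj (he.symm.trans he')]
  · linarith [hdom.tilde_snd_pos l, hdom.tilde_snd_pos l']
  · linarith [hdom.tilde_snd_pos l, hdom.tilde_snd_pos l']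
  · rw [hinj (neg_inj.mp (he.symm.trans he'))]

lemma abs_tact_snd (w : W0T m) (v : Wt m) (i : Fin m) :
    |(tact m w v).2 i| = |v.2 (w.1⁻¹ i)| := by
  simp only [tact]
  split <;> simp

lemma IsPlus.range_tilde_snd {xi nu : Wt m} (h : IsPlus m xi nu) :
    Set.range (tilde m nu).2 = Set.range fun i => |(tilde m xi).2 i| := by
  obtain ⟨hdom, w, hw⟩ := h
  have habs : (tilde m nu).2 = (fun i => |(tilde m xi).2 i|) ∘ ⇑w.1⁻¹ := by
    funext i
    rw [Function.comp_apply, ← abs_tact_snd, ← hw, abs_of_pos (hdom.tilde_snd_pos i)]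
  rw [habs, Set.range_comp, Equiv.range_eq_univ, Set.image_univ]

lemma IsPlus.unique {xi nu nu' : Wt m} (h : IsPlus m xi nu) (h' : IsPlus m xi nu') :
    nu = nu' := by
  have hsnd : (tilde m nu).2 = (tilde m nu').2 :=
    (h.1.tilde_snd_strictAnti_s9.range_inj h'.1.tilde_snd_strictAnti_s9).mp
      (h.range_tilde_snd.trans h'.range_tilde_snd.symm)
  obtain ⟨-, w, hw⟩ := h
  obtain ⟨-, w', hw'⟩ := h'
  have hfst : (tilde m nu).1 = (tilde m nu').1 := by rw [hw, hw']; rfl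
  exact tilde_injective (Prod.ext hfst hsnd)

lemma isLeast_of_forall_lt_not {P : ℕ → Prop} {a : ℕ} (ha : 0 < a) (hP : P a)
    (hmin : ∀ b, 0 < b → b < a → ¬P b) : IsLeast {b | 0 < b ∧ P b} a :=
  ⟨⟨ha, hP⟩, fun b ⟨hb, hPb⟩ => not_lt.mp fun hba => hmin b hb hba hPb⟩

lemma IsHat.unique {mu nu nu' : Wt m} (hdom : G0Dom m mu)
    (h : IsHat m mu nu) (h' : IsHat m mu nu') : nu = nu' := by
  obtain ⟨γ, hγ, a, ha, hreg, hmin, hplus⟩ := h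
  obtain ⟨γ', hγ', a', ha', hreg', hmin', hplus'⟩ := h'
  obtain rfl := hγ.unique hdom hγ'
  obtain rfl := (isLeast_of_forall_lt_not ha hreg hmin).unique
    (isLeast_of_forall_lt_not ha' hreg' hmin')
  exact hplus.unique hplus'

lemma IsCheck.unique {mu nu nu' : Wt m} (hdom : G0Dom m mu)
    (h : IsCheck m mu nu) (h' : IsCheck m mu nu') : nu = nu' := by
  obtain ⟨γ, hγ, a, ha, hreg, hmin, hplus⟩ := h
  obtain ⟨γ', hγ', a', ha', hreg', hmin', hplus'⟩ := h'
  obtain rfl := hγ.unique hdom hγ'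
  obtain rfl := (isLeast_of_forall_lt_not ha hreg hmin).unique
    (isLeast_of_forall_lt_not ha' hreg' hmin')
  exact hplus.unique hplus'

end

theorem sigma_hat_check_identity_general (m : ℕ) (lam : Wt m)
    (hdom : G0Dom m lam)
    (A B C D : Wt m)
    (hA : IsHat m (sigmaW m lam) A) (hB : IsCheck m lam B)
    (hC : IsCheck m (sigmaW m lam) C) (hD : IsHat m lam D) :
    A = sigmaW m B ∧ C = sigmaW m D :=
  ⟨hA.unique hdom.sigmaW hB.sigmaW_isHat, hC.unique hdom.sigmaW hD.sigmaW_isCheck⟩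

/-- identity (2.13) of the paper for `k = 2m+1`: for every
integral `g₀`-dominant atypical weight `λ`, one has `(λ^σ)^ = (λˇ)^σ` and
`(λ^σ)ˇ = (λ^)^σ`. -/
theorem sigma_hat_check_identity (m : ℕ) (hm : 1 ≤ m) (lam : Wt m)
    (hInt : Integral m lam) (hdom : G0Dom m lam) (hatyp : Atypical m lam)
    (A B C D : Wt m)
    (hA : IsHat m (sigmaW m lam) A) (hB : IsCheck m lam B)
    (hC : IsCheck m (sigmaW m lam) C) (hD : IsHat m lam D) :
    A = sigmaW m B ∧ C = sigmaW m D :=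
  sigma_hat_check_identity_general m lam hdom A B C D hA hB hC hD

end
end
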